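/- Let b > 1 with K_b < ∞ and let k ≥ 2. If 𝕒_1 <_lex 𝕒_2 <_lex ⋯ <_lex 𝕒_N are pairwise-consecutive elements of 𝒟_A^{k−1} (each 𝕒_i and 𝕒_{i+1} are consecutive admissible (k−1)-blocks) that all belong to E_{k−1,d}, then N ≤ K_b + 2. -/

import Mathlib

/-- The beta transformation `T x = b x - ⌊b x⌋`. -/
noncomputable def bT (b : ℝ) (x : ℝ) : ℝ := b * x - ⌊b * x⌋

/-- `bdig b j x` is the `(j+1)`-th digit `d_{j+1}(x) = ⌊b · T^[j] x⌋` of the `b`-expansion. -/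
noncomputable def bdig (b : ℝ) (j : ℕ) (x : ℝ) : ℤ := ⌊b * (bT b)^[j] x⌋

/-- A block `a_0 ⋯ a_{n-1}` (0-indexed) is admissible if it consists of the
first `n` digits of the `b`-expansion of some `x ∈ [0,1)`. -/
def bAdm (b : ℝ) (n : ℕ) (a : ℕ → ℤ) : Prop :=
  ∃ x ∈ Set.Ico (0 : ℝ) 1, ∀ j < n, a j = bdig b j x

/-- The value `𝕒(b) = Σ_{k=1}^n a_k b^{-k}` of a block. -/
noncomputable def blockVal (b : ℝ) (n : ℕ) (a : ℕ → ℤ) : ℝ :=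
  ∑ j ∈ Finset.range n, (a j : ℝ) * b ^ (-((j : ℤ) + 1))

/-- `a ∈ E_{k-1,d}`: `a` is an admissible `(k-1)`-block and for some `j < k`
(1-indexed), the value of the block `a_j ⋯ a_{k-1} (d+1)` exceeds 1.
Here `a` is 0-indexed, so the suffix starts at a 0-indexed position `j < k-1`. -/
def memE (b : ℝ) (k : ℕ) (d : ℤ) (a : ℕ → ℤ) : Prop :=
  bAdm b (k - 1) a ∧ ∃ j < k - 1,
    1 < (∑ m ∈ Finset.range (k - 1 - j), (a (j + m) : ℝ) * b ^ (-((m : ℤ) + 1)))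
        + (d + 1 : ℝ) * b ^ (-((k - 1 - j : ℕ) : ℤ) - 1)

/-- Lexicographic order on blocks of length `n`. -/
def lexLt (n : ℕ) (a c : ℕ → ℤ) : Prop :=
  ∃ m < n, (∀ j < m, a j = c j) ∧ a m < c m

/-- Two admissible `n`-blocks are consecutive (with `a <_lex c`) if no admissible
`n`-block lies strictly between them. -/
def bConsecutive (b : ℝ) (n : ℕ) (a c : ℕ → ℤ) : Prop :=
  bAdm b n a ∧ bAdm b n c ∧ lexLt n a c ∧
    ¬ ∃ e : ℕ → ℤ, bAdm b n e ∧ lexLt n a e ∧ lexLt n e c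

/-- The set of lengths `L` of zero blocks occurring among the first `i_b` digits of the
`b`-expansion of `b - ⌊b⌋` (a zero run of length `L` lies within the first `i_b` digits
iff some strictly later digit is nonzero).  `K_b < ∞` means this set has a greatest
element `K_b`. -/
def zeroRunSet (b : ℝ) : Set ℕ :=
  {L | ∃ p : ℕ, (∀ m < L, bdig b (p + m) (b - ⌊b⌋) = 0) ∧
        ∃ j, p + L ≤ j ∧ bdig b j (b - ⌊b⌋) ≠ 0}


/-!
Let `a <_lex a'` be consecutive admissible blocks of length `n = k - 1`, first differing at
position `m`. Their cylinders are adjacent intervals, so the supremum of the cylinder of `a` is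
the left endpoint of the cylinder of `a'`: hence `a'` vanishes after position `m`, and
`T^(m+1)` maps the points of the cylinder of `a` near its supremum to points `1 - ε`, so `a`
continues after `m` with a prefix of `c`. Membership of `a` in `E_{k-1,d}` turns into an upper
bound on `1 - (c_1 ⋯ c_W)(b)`, `W = n - 1 - m`, which forces `W ≥ 1` because `d + 1 ≤ b`.

Along the chain, the junction positions `m_i` strictly decrease, since `c_1 ≠ 0` while `a_{i+1}`
vanishes after `m_i`. In the middle block of the last two junctions, the zeros after `m_{N-2}`
are read as digits of `c`; they give `d ≤ 0`, and then the bound from `E_{k-1,d}` adds one more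
zero, so `c` has a run of `N - 1` zeros away from its first digit. Finally `c` agrees with the
`b`-expansion of `1` as long as that expansion has not terminated, and is periodic with the
length of that expansion if it does; either way a run of `ℓ + 1` zeros of `c` gives a run of
`ℓ` zeros of the expansion of `b - ⌊b⌋` followed by a nonzero digit, so `N - 2 ≤ K_b`.
-/

open Filter Topology

section Dynamics

variable {b : ℝ}

lemma bT_mem_Ico (x : ℝ) : bT b x ∈ Set.Ico 0 1 :=
  ⟨Int.fract_nonneg (b * x), Int.fract_lt_one (b * x)⟩

lemma iterate_bT_mem_Ico {x : ℝ} (hx : x ∈ Set.Ico 0 1) : ∀ j, (bT b)^[j] x ∈ Set.Ico 0 1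
  | 0 => hx
  | j + 1 => by rw [Function.iterate_succ_apply']; exact bT_mem_Ico _

lemma iterate_bT_nonneg {x : ℝ} (hx : 0 ≤ x) : ∀ j, 0 ≤ (bT b)^[j] x
  | 0 => hx
  | j + 1 => by rw [Function.iterate_succ_apply']; exact (bT_mem_Ico _).1

lemma bdig_nonneg (hb : 0 ≤ b) {x : ℝ} (hx : 0 ≤ x) (j : ℕ) : 0 ≤ bdig b j x :=
  Int.floor_nonneg.2 (mul_nonneg hb (iterate_bT_nonneg hx j))

lemma iterate_bT_succ (j : ℕ) (x : ℝ) :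
    (bT b)^[j + 1] x = b * (bT b)^[j] x - bdig b j x := by
  rw [Function.iterate_succ_apply']; rfl

lemma bdig_add (r q : ℕ) (x : ℝ) : bdig b (r + q) x = bdig b r ((bT b)^[q] x) := by
  rw [bdig, bdig, Function.iterate_add_apply]

lemma bdig_sub_floor (j : ℕ) : bdig b j (b - ⌊b⌋) = bdig b (j + 1) 1 := by
  rw [bdig_add, Function.iterate_one, bT, mul_one]

lemma iterate_bT_zero (j : ℕ) : (bT b)^[j] 0 = 0 :=
  Function.iterate_fixed (by simp [bT]) j

lemma iterate_bT_pos_of_le {x : ℝ} (hx : 0 ≤ x) {q r : ℕ} (hrq : r ≤ q) (h : 0 < (bT b)^[q] x) :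
    0 < (bT b)^[r] x := by
  refine (iterate_bT_nonneg hx r).lt_of_ne fun h0 => h.ne' ?_
  rw [← Nat.sub_add_cancel hrq, Function.iterate_add_apply, ← h0, iterate_bT_zero]

lemma blockVal_succ (n : ℕ) (a : ℕ → ℤ) :
    blockVal b (n + 1) a = blockVal b n a + a n * b ^ (-((n : ℤ) + 1)) :=
  Finset.sum_range_succ _ _

lemma blockVal_congr {n : ℕ} {a a' : ℕ → ℤ} (h : ∀ j < n, a j = a' j) :
    blockVal b n a = blockVal b n a' :=
  Finset.sum_congr rfl fun j hj => by rw [h j (Finset.mem_range.1 hj)]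

lemma blockVal_add (hb : b ≠ 0) (a : ℕ → ℤ) (j n : ℕ) :
    blockVal b (j + n) a = blockVal b j a + b ^ (-(j : ℤ)) * blockVal b n fun i => a (j + i) := by
  rw [blockVal, Finset.sum_range_add, blockVal, blockVal, Finset.mul_sum]
  congr 1
  refine Finset.sum_congr rfl fun i _ => ?_
  rw [mul_left_comm, ← zpow_add₀ hb]
  push_cast
  ring_nf

lemma blockVal_nonneg (hb : 0 < b) {n : ℕ} {a : ℕ → ℤ} (ha : ∀ j < n, 0 ≤ a j) :
    0 ≤ blockVal b n a :=
  Finset.sum_nonneg fun j hj => mul_nonneg (by exact_mod_cast ha j (Finset.mem_range.1 hj))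
    (zpow_pos hb _).le

lemma eq_zero_of_blockVal_nonpos (hb : 0 < b) {n : ℕ} {a : ℕ → ℤ} (ha : ∀ j < n, 0 ≤ a j)
    (h : blockVal b n a ≤ 0) : ∀ j < n, a j = 0 := by
  have hsum := (Finset.sum_eq_zero_iff_of_nonneg fun j hj => mul_nonneg
    (by exact_mod_cast ha j (Finset.mem_range.1 hj)) (zpow_pos hb _).le).1
    (h.antisymm (blockVal_nonneg hb ha))
  intro j hj
  exact_mod_cast (mul_eq_zero.1 (hsum j (Finset.mem_range.2 hj))).resolve_right (zpow_pos hb _).ne'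

lemma iterate_bT_eq_mul_sub_blockVal (hb : b ≠ 0) (x : ℝ) (q : ℕ) :
    (bT b)^[q] x = b ^ q * (x - blockVal b q fun j => bdig b j x) := by
  induction q with
  | zero => simp [blockVal]
  | succ q ih =>
    rw [iterate_bT_succ, ih, blockVal_succ, ← Nat.cast_succ, zpow_neg, zpow_natCast]
    field_simp
    ring

end Dynamics

section Cylinders

variable {b : ℝ} {n : ℕ} {a a' : ℕ → ℤ}

def bCylinder (b : ℝ) (n : ℕ) (a : ℕ → ℤ) : Set ℝ :=
  {x | x ∈ Set.Ico 0 1 ∧ ∀ j < n, a j = bdig b j x}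

lemma bCylinder_subset_Ico (hb : 0 < b) {q : ℕ} (hq : q ≤ n) :
    bCylinder b n a ⊆ Set.Ico (blockVal b q a) (blockVal b q a + b ^ (-(q : ℤ))) := by
  intro x hx
  have hT := iterate_bT_mem_Ico (b := b) hx.1 q
  rw [iterate_bT_eq_mul_sub_blockVal hb.ne' x q,
    ← blockVal_congr fun j hj => hx.2 j (by omega)] at hT
  have hbq : 0 < b ^ q := pow_pos hb q
  rw [zpow_neg, zpow_natCast]
  constructor
  · nlinarith [hT.1]
  · rw [← sub_lt_iff_lt_add', inv_eq_one_div, lt_div_iff₀' hbq]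
    exact hT.2

lemma lt_of_lexLt (hb : 0 < b) {x y : ℝ} (hx : x ∈ bCylinder b n a) (hy : y ∈ bCylinder b n a')
    (h : lexLt n a a') : x < y := by
  obtain ⟨m, hmn, heq, hlt⟩ := h
  have hx' := (bCylinder_subset_Ico hb (Nat.succ_le_of_lt hmn) hx).2
  have hy' := (bCylinder_subset_Ico hb (Nat.succ_le_of_lt hmn) hy).1
  rw [blockVal_succ, blockVal_congr heq] at hx'
  rw [blockVal_succ] at hy'
  have : (a m : ℝ) + 1 ≤ a' m := by exact_mod_cast hlt
  have hpow : 0 < b ^ (-((m : ℤ) + 1)) := zpow_pos hb _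
  push_cast at hx'
  nlinarith

lemma lexLt_trichotomy (n : ℕ) (a a' : ℕ → ℤ) :
    (∀ j < n, a j = a' j) ∨ lexLt n a a' ∨ lexLt n a' a := by
  classical
  by_cases h : ∃ j, j < n ∧ a j ≠ a' j
  · obtain ⟨hmn, hne⟩ := Nat.find_spec h
    have heq : ∀ j < Nat.find h, a j = a' j := fun j hj =>
      not_not.1 fun hne' => Nat.find_min h hj ⟨by omega, hne'⟩
    rcases hne.lt_or_gt with hlt | hgt
    · exact .inr (.inl ⟨_, hmn, heq, hlt⟩)
    · exact .inr (.inr ⟨_, hmn, fun j hj => (heq j hj).symm, hgt⟩)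
  · push Not at h
    exact .inl h

lemma bConsecutive.mem_or_mem (hb : 0 < b) (h : bConsecutive b n a a') {x x' y : ℝ}
    (hx : x ∈ bCylinder b n a) (hx' : x' ∈ bCylinder b n a') (hy : y ∈ Set.Ico 0 1)
    (hxy : x ≤ y) (hyx' : y < x') : y ∈ bCylinder b n a ∨ y ∈ bCylinder b n a' := by
  have hy' : y ∈ bCylinder b n fun j => bdig b j y := ⟨hy, fun _ _ => rfl⟩
  rcases lexLt_trichotomy n (fun j => bdig b j y) a with h1 | h1 | h1
  · exact .inl ⟨hy, fun j hj => (h1 j hj).symm⟩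
  · exact absurd (lt_of_lexLt hb hy' hx h1) hxy.not_gt
  rcases lexLt_trichotomy n (fun j => bdig b j y) a' with h2 | h2 | h2
  · exact .inr ⟨hy, fun j hj => (h2 j hj).symm⟩
  · exact absurd ⟨_, ⟨y, hy, fun _ _ => rfl⟩, h1, h2⟩ h.2.2.2
  · exact absurd (lt_of_lexLt hb hx' hy' h2) hyx'.not_gt

lemma blockVal_eq_of_forall_lt_eq (hb : b ≠ 0) {m : ℕ} (hmn : m < n)
    (heq : ∀ j < m, a j = a' j) :
    blockVal b n a' = blockVal b (m + 1) a + b ^ (-((m : ℤ) + 1)) +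
      b ^ (-((m : ℤ) + 1)) *
        ((a' m - a m - 1 : ℝ) + blockVal b (n - (m + 1)) fun i => a' (m + 1 + i)) := by
  rw [← Nat.add_sub_of_le hmn, Nat.add_sub_cancel_left, blockVal_add hb, blockVal_succ,
    blockVal_succ, blockVal_congr heq]
  push_cast
  ring

lemma bConsecutive.exists_isLUB (hb : 0 < b) (h : bConsecutive b n a a') :
    ∃ m < n, (∀ r, m < r → r < n → a' r = 0) ∧
      IsLUB (bCylinder b n a) (blockVal b (m + 1) a + b ^ (-((m : ℤ) + 1))) := by
  obtain ⟨⟨x, hx⟩, ⟨x', hx'⟩, ⟨m, hmn, heq, hlt⟩, -⟩ := id h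
  have hid := blockVal_eq_of_forall_lt_eq hb.ne' hmn heq
  set S := blockVal b (m + 1) a + b ^ (-((m : ℤ) + 1))
  set L := blockVal b n a'
  have ha' : ∀ i < n - (m + 1), 0 ≤ a' (m + 1 + i) := fun i _ => by
    rw [hx'.2 _ (by omega)]; exact bdig_nonneg hb.le hx'.1.1 _
  have htail := blockVal_nonneg hb ha'
  have hdig : (0 : ℝ) ≤ a' m - a m - 1 := by
    rw [sub_sub, sub_nonneg]
    exact_mod_cast (hlt : a m + 1 ≤ a' m)
  have hpow := zpow_pos hb (-((m : ℤ) + 1))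
  have hSL : S ≤ L := by rw [hid]; nlinarith
  have hlt_S : ∀ y ∈ bCylinder b n a, y < S := fun y hy => by
    simpa [S, Nat.cast_succ] using (bCylinder_subset_Ico hb hmn hy).2
  have hL_le : ∀ y ∈ bCylinder b n a', L ≤ y := fun y hy => (bCylinder_subset_Ico hb le_rfl hy).1
  have hmem : ∀ y, x ≤ y → y < L → y ∈ bCylinder b n a := fun y hxy hyL => by
    have hLx' := hL_le x' hx'
    refine (h.mem_or_mem hb hx hx' ⟨hx.1.1.trans hxy, ?_⟩ hxy (by linarith)).resolve_right
      fun hy => (hL_le y hy).not_gt hyL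
    linarith [hx'.1.2]
  have hLS : L ≤ S := by
    by_contra! hSL'
    exact (hlt_S S (hmem S (hlt_S x hx).le hSL')).false
  refine ⟨m, hmn, fun r hmr hrn => ?_, fun y hy => (hlt_S y hy).le, fun u hu => ?_⟩
  · have htail0 : (blockVal b (n - (m + 1)) fun i => a' (m + 1 + i)) ≤ 0 := by nlinarith
    simpa [Nat.add_sub_cancel' hmr] using
      eq_zero_of_blockVal_nonpos hb ha' htail0 (r - (m + 1)) (by omega)
  · refine le_of_forall_lt fun z hz => ?_
    have hy : max x ((z + S) / 2) ∈ bCylinder b n a :=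
      hmem _ (le_max_left _ _) ((max_lt (hlt_S x hx) (by linarith)).trans_le hSL)
    linarith [hu hy, le_max_right x ((z + S) / 2)]

lemma exists_bdig_ne_zero_of_iterate_pos (hb : 1 < b) {x : ℝ} {q : ℕ}
    (h : 0 < (bT b)^[q + 1] x) : ∃ j > q, bdig b j x ≠ 0 := by
  by_contra! hall
  have hy : ∀ n, (bT b)^[q + 1] x ∈ bCylinder b n 0 := fun n =>
    ⟨by rw [Function.iterate_succ_apply']; exact bT_mem_Ico _,
      fun j _ => by rw [← bdig_add, hall _ (by omega), Pi.zero_apply]⟩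
  obtain ⟨n, hn⟩ := exists_pow_lt_of_lt_one h (inv_lt_one_of_one_lt₀ hb)
  have := (bCylinder_subset_Ico (by linarith) le_rfl (hy n)).2
  simp only [blockVal, Pi.zero_apply, Int.cast_zero, zero_mul, Finset.sum_const_zero, zero_add,
    zpow_neg, zpow_natCast, ← inv_pow] at this
  linarith

end Cylinders

section LeftLimits

variable {b x : ℝ}

lemma iterate_bT_sub (hb : 0 ≤ b) {η : ℝ} (hη : 0 ≤ η) {q : ℕ}
    (h : ∀ r ≤ q, b ^ r * η ≤ (bT b)^[r] x) : (bT b)^[q] (x - η) = (bT b)^[q] x - b ^ q * η := by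
  induction q with
  | zero => simp
  | succ q ih =>
    have hq := h (q + 1) le_rfl
    rw [iterate_bT_succ, pow_succ] at hq
    have hfloor : ⌊b * ((bT b)^[q] x - b ^ q * η)⌋ = bdig b q x := by
      have hlt : b * (bT b)^[q] x < bdig b q x + 1 := Int.lt_floor_add_one _
      have : 0 ≤ b ^ q * b * η := by positivity
      rw [Int.floor_eq_iff]
      constructor <;> nlinarith
    rw [Function.iterate_succ_apply', ih fun r hr => h r (by omega), bT, hfloor, iterate_bT_succ,
      pow_succ]
    ring

lemma eventually_iterate_bT_sub (hb : 0 < b) {q : ℕ} (h : ∀ r ≤ q, 0 < (bT b)^[r] x) :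
    ∀ᶠ η in 𝓝[>] (0 : ℝ), (bT b)^[q] (x - η) = (bT b)^[q] x - b ^ q * η := by
  have hsmall : ∀ r ∈ Finset.range (q + 1), ∀ᶠ η in 𝓝[>] (0 : ℝ), η < (bT b)^[r] x / b ^ r :=
    fun r hr => (eventually_lt_nhds (div_pos (h r (by simpa [Nat.lt_succ_iff] using hr))
      (pow_pos hb r))).filter_mono nhdsWithin_le_nhds
  filter_upwards [self_mem_nhdsWithin, (eventually_all_finset _).2 hsmall] with η hη hηr
  refine iterate_bT_sub hb.le (le_of_lt hη) fun r hr => ?_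
  have := hηr r (Finset.mem_range.2 (by omega))
  rw [lt_div_iff₀ (pow_pos hb r)] at this
  linarith

lemma eventually_bdig_sub (hb : 0 < b) (hx : 0 ≤ x) {j : ℕ} (h : 0 < (bT b)^[j + 1] x) :
    ∀ᶠ η in 𝓝[>] (0 : ℝ), bdig b j (x - η) = bdig b j x := by
  have hpos : ∀ r ≤ j + 1, 0 < (bT b)^[r] x := fun r hr => iterate_bT_pos_of_le hx hr h
  filter_upwards [eventually_iterate_bT_sub hb hpos,
    eventually_iterate_bT_sub hb (q := j) fun r hr => hpos r (by omega)] with η h1 h2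
  have e1 := iterate_bT_succ (b := b) j (x - η)
  have e2 := iterate_bT_succ (b := b) j x
  rw [h1, h2, pow_succ] at e1
  exact_mod_cast (by linarith : (bdig b j (x - η) : ℝ) = bdig b j x)

lemma eventually_iterate_bT_sub_of_eq_zero (hb : 0 < b) (hx : 0 ≤ x) {p : ℕ}
    (hp : 0 < (bT b)^[p] x) (h0 : (bT b)^[p + 1] x = 0) :
    ∀ᶠ η in 𝓝[>] (0 : ℝ), (bT b)^[p + 1] (x - η) = 1 - b ^ (p + 1) * η := by
  have hsmall : ∀ᶠ η in 𝓝[>] (0 : ℝ), η ∈ Set.Ioo 0 (1 / b ^ (p + 1)) :=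
    Ioo_mem_nhdsGT (by positivity)
  filter_upwards [eventually_iterate_bT_sub hb fun r hr => iterate_bT_pos_of_le hx hr hp, hsmall]
    with η h1 hη
  have hint := iterate_bT_succ (b := b) p x
  rw [h0] at hint
  rw [Function.iterate_succ_apply', h1]
  have hη1 : b ^ (p + 1) * η < 1 := by rw [← lt_div_iff₀' (by positivity)]; exact hη.2
  have hη0 : 0 < b ^ (p + 1) * η := mul_pos (pow_pos hb _) hη.1
  refine Int.fract_eq_iff.2 ⟨by linarith, by linarith, bdig b p x - 1, ?_⟩
  push_cast
  linear_combination -hint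

end LeftLimits

lemma Function.Periodic.run_mod {α : Type*} {f : ℕ → α} {p : ℕ} (hf : Function.Periodic f p)
    (hp : 0 < p) {v : α} (hv : f 0 ≠ v) {s ℓ : ℕ} (hrun : ∀ t ≤ ℓ, f (s + t) = v) :
    0 < s % p ∧ s % p + ℓ < p ∧ ∀ t ≤ ℓ, f (s % p + t) = v := by
  have hmod : ∀ t, f (s % p + t) = f (s + t) := fun t => by
    have : (s % p + t) % p = (s + t) % p := by simp [Nat.add_mod]
    rw [← hf.map_mod_nat, this, hf.map_mod_nat]
  refine ⟨Nat.pos_of_ne_zero fun h0 => hv ?_, ?_, fun t ht => (hmod t).trans (hrun t ht)⟩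
  · simpa [h0] using (hmod 0).trans (hrun 0 (Nat.zero_le _))
  · by_contra! hle
    have hp' := (hmod (p - s % p)).trans (hrun _ (by omega))
    rw [Nat.add_sub_cancel' (Nat.mod_lt s hp).le, hf.eq] at hp'
    exact hv hp'

def IsQuasiGreedyOne (b : ℝ) (c : ℕ → ℤ) : Prop :=
  ∀ j, ∀ᶠ ε in 𝓝[>] (0 : ℝ), bdig b j (1 - ε) = c j

namespace IsQuasiGreedyOne

variable {b : ℝ} {c : ℕ → ℤ}

lemma eq_of_eventually (hc : IsQuasiGreedyOne b c) {j : ℕ} {v : ℤ}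
    (h : ∀ᶠ ε in 𝓝[>] (0 : ℝ), bdig b j (1 - ε) = v) : c j = v := by
  obtain ⟨ε, h1, h2⟩ := ((hc j).and h).exists
  exact h1 ▸ h2

lemma eventually_mem_bCylinder (hc : IsQuasiGreedyOne b c) (n : ℕ) :
    ∀ᶠ ε in 𝓝[>] (0 : ℝ), 1 - ε ∈ bCylinder b n c := by
  filter_upwards [Ioo_mem_nhdsGT one_pos,
    (eventually_all_finset (Finset.range n)).2 fun j _ => hc j] with ε hε hdig
  exact ⟨⟨by linarith [hε.2], by linarith [hε.1]⟩,
    fun j hj => (hdig j (Finset.mem_range.2 hj)).symm⟩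

lemma nonneg (hc : IsQuasiGreedyOne b c) (hb : 0 ≤ b) (j : ℕ) : 0 ≤ c j := by
  obtain ⟨ε, hε⟩ := (hc.eventually_mem_bCylinder (j + 1)).exists
  rw [hε.2 j j.lt_succ_self]
  exact bdig_nonneg hb hε.1.1 j

lemma blockVal_lt_one (hc : IsQuasiGreedyOne b c) (hb : 0 < b) (n : ℕ) : blockVal b n c < 1 := by
  obtain ⟨ε, hε, hε0⟩ := ((hc.eventually_mem_bCylinder n).and self_mem_nhdsWithin).exists
  linarith [(bCylinder_subset_Ico hb le_rfl hε).1, (hε0 : 0 < ε)]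

lemma one_le_apply_zero (hc : IsQuasiGreedyOne b c) (hb : 1 < b) : 1 ≤ c 0 := by
  have hb' : b⁻¹ < 1 := inv_lt_one_of_one_lt₀ hb
  obtain ⟨ε, hdig, hε⟩ := ((hc 0).and (Ioo_mem_nhdsGT (sub_pos.2 hb'))).exists
  rw [← hdig, bdig, Function.iterate_zero_apply, Int.le_floor, Int.cast_one]
  have : b * b⁻¹ = 1 := mul_inv_cancel₀ (by positivity)
  nlinarith [hε.2]

lemma le_sub_one_of_forall_le (hc : IsQuasiGreedyOne b c) (hb : 1 < b) {d : ℤ}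
    (hd : ∀ j, d ≤ c j) : (d : ℝ) ≤ b - 1 := by
  have hb0 : 0 < b := by linarith
  have hgeom := ((hasSum_geometric_of_lt_one (inv_nonneg.2 hb0.le) (inv_lt_one_of_one_lt₀ hb)
    |>.mul_right b⁻¹).tendsto_sum_nat).const_mul (d : ℝ)
  have hle : (d : ℝ) * ((1 - b⁻¹)⁻¹ * b⁻¹) ≤ 1 := by
    refine le_of_tendsto' hgeom fun n => ?_
    rw [Finset.mul_sum]
    refine le_trans (Finset.sum_le_sum fun j _ => ?_) (hc.blockVal_lt_one hb0 n).le
    rw [← pow_succ, inv_pow, ← zpow_natCast, ← zpow_neg, Nat.cast_succ]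
    exact mul_le_mul_of_nonneg_right (by exact_mod_cast hd j) (zpow_pos hb0 _).le
  have hgeom_sum : (1 - b⁻¹)⁻¹ * b⁻¹ = (b - 1)⁻¹ := by field_simp
  rwa [hgeom_sum, ← div_eq_mul_inv, div_le_one (by linarith)] at hle

lemma eq_of_isLUB (hc : IsQuasiGreedyOne b c) (hb : 0 < b) {n m : ℕ} {a : ℕ → ℤ} (hmn : m < n)
    (hS : IsLUB (bCylinder b n a) (blockVal b (m + 1) a + b ^ (-((m : ℤ) + 1)))) :
    ∀ r, m + 1 + r < n → a (m + 1 + r) = c r := by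
  obtain ⟨u, hu, hsub⟩ := mem_nhdsGT_iff_exists_Ioo_subset.1 (hc.eventually_mem_bCylinder n)
  obtain ⟨x, hx, hSx, -⟩ := hS.exists_between_sub_self (mul_pos hu (zpow_pos hb (-((m : ℤ) + 1))))
  have hT := iterate_bT_mem_Ico (b := b) hx.1 (m + 1)
  have hpow : b ^ (m + 1) * b ^ (-((m : ℤ) + 1)) = 1 := by
    rw [← Nat.cast_succ, zpow_neg, zpow_natCast, mul_inv_cancel₀ (by positivity)]
  -- `T^(m+1) x = 1 - ε` with `0 < ε < u`
  have hmem : 1 - (1 - (bT b)^[m + 1] x) ∈ bCylinder b n c := by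
    refine hsub ⟨by linarith [hT.2], ?_⟩
    rw [iterate_bT_eq_mul_sub_blockVal hb.ne', ← blockVal_congr fun j hj => hx.2 j (by omega)]
    calc _ = b ^ (m + 1) * (blockVal b (m + 1) a + b ^ (-((m : ℤ) + 1)) - x) := by
          linear_combination -hpow
      _ < b ^ (m + 1) * (u * b ^ (-((m : ℤ) + 1))) :=
          mul_lt_mul_of_pos_left (by linarith) (pow_pos hb _)
      _ = u := by rw [mul_left_comm, hpow, mul_one]
  intro r hr
  rw [sub_sub_cancel] at hmem
  rw [hmem.2 r (by omega), hx.2 _ hr, add_comm, bdig_add]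

lemma eq_zero_of_one_sub_blockVal_lt (hc : IsQuasiGreedyOne b c) (hb : 0 < b) {W : ℕ} {d : ℤ}
    (hd : d ≤ 0) (h : 1 - blockVal b W c < (d + 1) * b ^ (-((W : ℤ) + 1))) : c W = 0 := by
  have hlt := hc.blockVal_lt_one hb (W + 1)
  rw [blockVal_succ] at hlt
  have hpow := zpow_pos hb (-((W : ℤ) + 1))
  have hd' : (d : ℝ) + 1 ≤ 1 := by exact_mod_cast Int.add_le_add_right hd 1
  have hcW : (c W : ℝ) < 1 := by nlinarith
  have hcW' : c W < 1 := by exact_mod_cast hcW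
  have := hc.nonneg hb.le W
  omega

lemma eq_bdig_one (hc : IsQuasiGreedyOne b c) (hb : 0 < b) {j : ℕ} (h : 0 < (bT b)^[j + 1] 1) :
    c j = bdig b j 1 :=
  hc.eq_of_eventually (eventually_bdig_sub hb zero_le_one h)

lemma periodic (hc : IsQuasiGreedyOne b c) (hb : 0 < b) {p : ℕ} (hp : 0 < (bT b)^[p] 1)
    (h0 : (bT b)^[p + 1] 1 = 0) : Function.Periodic c (p + 1) := fun t => by
  have hscale := Filter.TendstoNhdsWithinIoi.const_mul (pow_pos hb (p + 1))
    (tendsto_id (x := 𝓝[>] (0 : ℝ)))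
  rw [mul_zero] at hscale
  refine hc.eq_of_eventually ?_
  filter_upwards [eventually_iterate_bT_sub_of_eq_zero hb zero_le_one hp h0,
    hscale.eventually (hc t)] with ε h1 h2
  rw [bdig_add, h1]
  exact h2

lemma mem_zeroRunSet (hc : IsQuasiGreedyOne b c) (hb : 1 < b) {s ℓ : ℕ} (hs : 0 < s)
    (hrun : ∀ t < ℓ, c (s + t) = 0) (hpos : 0 < (bT b)^[s + ℓ] 1) : ℓ ∈ zeroRunSet b := by
  have hb0 : 0 < b := by linarith
  obtain ⟨j, hj, hne⟩ := exists_bdig_ne_zero_of_iterate_pos hb (q := s + ℓ - 1)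
    (by rwa [Nat.sub_add_cancel (by omega)])
  refine ⟨s - 1, fun t ht => ?_, j - 1, by omega, ?_⟩
  · rw [bdig_sub_floor, show s - 1 + t + 1 = s + t by omega,
      ← hc.eq_bdig_one hb0 (iterate_bT_pos_of_le zero_le_one (q := s + ℓ) (by omega) hpos),
      hrun t ht]
  · rwa [bdig_sub_floor, Nat.sub_add_cancel (by omega)]

lemma le_of_run (hc : IsQuasiGreedyOne b c) (hb : 1 < b) {K : ℕ}
    (hK : K ∈ upperBounds (zeroRunSet b)) {s ℓ : ℕ} (hs : 0 < s)
    (hrun : ∀ t ≤ ℓ, c (s + t) = 0) : ℓ ≤ K := by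
  have hb0 : 0 < b := by linarith
  rcases (iterate_bT_nonneg zero_le_one (s + ℓ)).lt_or_eq with hpos | hzero
  · exact hK (hc.mem_zeroRunSet hb hs (fun t ht => hrun t ht.le) hpos)
  classical
  have hex : ∃ p, (bT b)^[p + 1] 1 = 0 := ⟨s + ℓ - 1, by rw [Nat.sub_add_cancel (by omega), hzero]⟩
  have hp : 0 < (bT b)^[Nat.find hex] 1 := by
    rcases h : Nat.find hex with _ | p
    · simp
    · exact (iterate_bT_nonneg zero_le_one _).lt_of_ne' (Nat.find_min hex (by omega))
  obtain ⟨hs', hlt, hrun'⟩ := (hc.periodic hb0 hp (Nat.find_spec hex)).run_mod (Nat.succ_pos _)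
    (by have := hc.one_le_apply_zero hb; omega) hrun
  exact hK (hc.mem_zeroRunSet hb hs' (fun t ht => hrun' t ht.le)
    (iterate_bT_pos_of_le zero_le_one (by omega) hp))

end IsQuasiGreedyOne

lemma one_sub_blockVal_lt_of_isLUB {b : ℝ} (hb : 0 < b) {n m W j : ℕ} {d : ℤ} {c a : ℕ → ℤ}
    (hW : m + 1 + W = n) (hjn : j < n)
    (hE : 1 < blockVal b (n - j) (fun i => a (j + i)) + (d + 1) * b ^ (-((n - j : ℕ) : ℤ) - 1))
    (hS : IsLUB (bCylinder b n a) (blockVal b (m + 1) a + b ^ (-((m : ℤ) + 1))))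
    (htail : ∀ r, m + 1 + r < n → a (m + 1 + r) = c r) :
    1 - blockVal b W c < (d + 1) * b ^ (-((W : ℤ) + 1)) := by
  have hS_le : blockVal b (m + 1) a + b ^ (-((m : ℤ) + 1)) ≤ blockVal b j a + b ^ (-(j : ℤ)) :=
    hS.2 fun x hx => (bCylinder_subset_Ico hb hjn.le hx).2.le
  have hsplit_j := blockVal_add hb.ne' a j (n - j)
  have hsplit_m := blockVal_add hb.ne' a (m + 1) W
  rw [Nat.add_sub_cancel' hjn.le] at hsplit_j
  rw [hW, blockVal_congr (a' := c) fun i _ => htail i (by omega)] at hsplit_m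
  push_cast at hsplit_m
  have hpow_j : b ^ (-(j : ℤ)) * b ^ (-((n - j : ℕ) : ℤ) - 1) = b ^ (-((n : ℤ) + 1)) := by
    rw [← zpow_add₀ hb.ne']
    push_cast [Nat.cast_sub hjn.le]
    ring_nf
  have hpow_m : b ^ (-((m : ℤ) + 1)) * b ^ (-((W : ℤ) + 1)) = b ^ (-((n : ℤ) + 1)) := by
    rw [← zpow_add₀ hb.ne', ← hW]
    push_cast
    ring_nf
  have hE' := mul_lt_mul_of_pos_left (sub_lt_iff_lt_add.2 hE) (zpow_pos hb (-(j : ℤ)))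
  rw [mul_sub, mul_one, mul_left_comm, hpow_j] at hE'
  refine lt_of_mul_lt_mul_left ?_ (zpow_pos hb (-((m : ℤ) + 1))).le
  rw [mul_left_comm, hpow_m]
  linarith

/-- Consequences of `a <_lex a'` being consecutive blocks of length `n`, first differing at
position `m`, with `a ∈ E_{n,d}`. -/
structure Junction (b : ℝ) (n : ℕ) (d : ℤ) (c a a' : ℕ → ℤ) (m : ℕ) : Prop where
  add_two_le : m + 2 ≤ n
  eq_zero : ∀ r, m < r → r < n → a' r = 0
  eq_c : ∀ r, m + 1 + r < n → a (m + 1 + r) = c r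
  one_sub_lt : 1 - blockVal b (n - (m + 1)) c < (d + 1) * b ^ (-(((n - (m + 1) : ℕ) : ℤ) + 1))

lemma bConsecutive.exists_junction {b : ℝ} (hb : 1 < b) {c a a' : ℕ → ℤ} {d : ℤ} {k : ℕ}
    (hc : IsQuasiGreedyOne b c) (hd : ∀ j, d ≤ c j) (h : bConsecutive b (k - 1) a a')
    (hE : memE b k d a) : ∃ m, Junction b (k - 1) d c a a' m := by
  have hb0 : 0 < b := by linarith
  obtain ⟨m, hmn, hzero, hS⟩ := h.exists_isLUB hb0
  have htail := hc.eq_of_isLUB hb0 hmn hS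
  obtain ⟨j, hj, hEj⟩ := hE.2
  have hlt := one_sub_blockVal_lt_of_isLUB hb0 (W := k - 1 - (m + 1)) (by omega) hj hEj hS htail
  refine ⟨m, ?_, hzero, htail, hlt⟩
  by_contra hm
  rw [show k - 1 - (m + 1) = 0 by omega] at hlt
  simp only [blockVal, Finset.range_zero, Finset.sum_empty, sub_zero, Nat.cast_zero, zero_add,
    zpow_neg_one, ← div_eq_mul_inv, one_lt_div hb0] at hlt
  linarith [hc.le_sub_one_of_forall_le hb hd]

namespace Junction

variable {b : ℝ} {n : ℕ} {d : ℤ} {c a₀ a₁ a₂ : ℕ → ℤ} {m₀ m₁ : ℕ}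

lemma lt (h₀ : Junction b n d c a₀ a₁ m₀) (h₁ : Junction b n d c a₁ a₂ m₁) (hc : c 0 ≠ 0) :
    m₁ < m₀ := by
  by_contra! hle
  have h₁n := h₁.add_two_le
  have hc0 := h₁.eq_c 0 (by omega)
  rw [h₀.eq_zero _ (by omega) (by omega)] at hc0
  exact hc hc0.symm

lemma eq_zero_of_lt (hb : 0 < b) (hc : IsQuasiGreedyOne b c) (hd : ∀ j, d ≤ c j)
    (h₀ : Junction b n d c a₀ a₁ m₀) (h₁ : Junction b n d c a₁ a₂ m₁) (hlt : m₁ < m₀) :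
    ∀ t ≤ n - 1 - m₀, c (m₀ - m₁ + t) = 0 := by
  have h₀n := h₀.add_two_le
  have hmid : ∀ s, m₀ - m₁ ≤ s → m₁ + 1 + s < n → c s = 0 := fun s h1 h2 => by
    rw [← h₁.eq_c s h2, h₀.eq_zero _ (by omega) h2]
  have hd0 : d ≤ 0 := (hd _).trans (hmid (m₀ - m₁) le_rfl (by omega)).le
  have hlast := hc.eq_zero_of_one_sub_blockVal_lt hb hd0 h₁.one_sub_lt
  intro t ht
  rcases Nat.lt_or_ge (m₁ + 1 + (m₀ - m₁ + t)) n with hlt' | hge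
  · exact hmid _ (by omega) hlt'
  · rwa [show m₀ - m₁ + t = n - (m₁ + 1) by omega]

end Junction

theorem stmt4_general (b : ℝ) (hb : 1 < b) (K : ℕ) (hK : IsGreatest (zeroRunSet b) K)
    (k : ℕ)
    (c : ℕ → ℤ)
    (hc : ∀ j, ∀ᶠ ε in nhdsWithin (0 : ℝ) (Set.Ioi 0), bdig b j (1 - ε) = c j)
    (d' : ℤ) (hd' : IsLeast {z : ℤ | ∃ j, c j = z} d')
    (d : ℤ) (hdd' : d ≤ d')
    (N : ℕ) (A : ℕ → ℕ → ℤ)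
    (hchain : ∀ i, i + 1 < N → bConsecutive b (k - 1) (A i) (A (i + 1)))
    (hE : ∀ i < N, memE b k d (A i)) :
    N ≤ K + 2 := by
  by_contra! hN
  obtain ⟨t, rfl⟩ : ∃ t, N = t + 3 := ⟨N - 3, by omega⟩
  have hc' : IsQuasiGreedyOne b c := hc
  have hd : ∀ j, d ≤ c j := fun j => hdd'.trans (hd'.2 ⟨j, rfl⟩)
  have hjunction : ∀ i, ∃ m, i + 1 < t + 3 → Junction b (k - 1) d c (A i) (A (i + 1)) m := by
    intro i
    by_cases hi : i + 1 < t + 3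
    · exact ((hchain i hi).exists_junction hb hc' hd (hE i (by omega))).imp fun _ h _ => h
    · exact ⟨0, fun h => absurd h hi⟩
  choose m hm using hjunction
  have hlt : ∀ i, i + 2 < t + 3 → m (i + 1) < m i := fun i hi =>
    (hm i (by omega)).lt (hm (i + 1) hi) (by have := hc'.one_le_apply_zero hb; omega)
  have hm_le : ∀ i, i + 1 < t + 3 → m i + i + 2 ≤ k - 1 := by
    intro i
    induction i with
    | zero => exact fun h => (hm 0 h).add_two_le
    | succ i ih => intro h; have := ih (by omega); have := hlt i h; omega
  have hrun := (hm t (by omega)).eq_zero_of_lt (by linarith) hc' hd (hm (t + 1) (by omega))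
    (hlt t (by omega))
  have hK' := hc'.le_of_run hb hK.2 (Nat.sub_pos_of_lt (hlt t (by omega))) hrun
  have := hm_le t (by omega)
  omega

/-- If `𝕒_1 <_lex ⋯ <_lex 𝕒_N` are pairwise-consecutive admissible `(k-1)`-blocks all
belonging to `E_{k-1,d}`, then `N ≤ K_b + 2`. -/
theorem stmt4 (b : ℝ) (hb : 1 < b) (K : ℕ) (hK : IsGreatest (zeroRunSet b) K)
    (k : ℕ) (hk : 2 ≤ k)
    (c : ℕ → ℤ)
    (hc : ∀ j, ∀ᶠ ε in nhdsWithin (0 : ℝ) (Set.Ioi 0), bdig b j (1 - ε) = c j)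
    (d' : ℤ) (hd' : IsLeast {z : ℤ | ∃ j, c j = z} d')
    (d : ℤ) (hd0 : 0 ≤ d) (hdd' : d ≤ d')
    (N : ℕ) (A : ℕ → ℕ → ℤ)
    (hchain : ∀ i, i + 1 < N → bConsecutive b (k - 1) (A i) (A (i + 1)))
    (hE : ∀ i < N, memE b k d (A i)) :
    N ≤ K + 2 :=
  stmt4_general b hb K hK k c hc d' hd' d hdd' N A hchain hE
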